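/- Let a, b be nonzero real numbers. Then the quaternion algebra (a,b/ℝ) is either isomorphic as an ℝ-algebra to the matrix algebra M₂(ℝ), or it is a division ring. -/

import Mathlib

/-!
If `a = s²` is a nonzero square, then `i ↦ diag(s, -s)` and `j ↦ !![0, 1; b, 0]` define an
algebra map `(a,b/K) → M₂(K)`; it is injective as soon as `2, s, b ≠ 0`, hence bijective
since both sides have dimension four. Over `ℝ` this covers `a > 0`, and `b > 0` after
swapping `i` and `j`. In the remaining case `a, b < 0` the reduced norm
`x̄ x = x₀² - a x₁² - b x₂² + ab x₃²` is positive definite, so `N(x)⁻¹ x̄` inverts every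
nonzero `x`.
-/

open Quaternion QuaternionAlgebra

namespace QuaternionAlgebra

variable {K : Type*} [Field K]

theorem isUnit_of_re_star_mul_self_ne_zero {c₁ c₂ c₃ : K} {x : ℍ[K,c₁,c₂,c₃]}
    (h : (star x * x).re ≠ 0) : IsUnit x := by
  set n := (star x * x).re
  have hl : star x * x = n := star_mul_eq_coe x
  have hr : x * star x = n := by rw [← star_comm_self', hl]
  refine ⟨⟨x, n⁻¹ • star x, ?_, ?_⟩, rfl⟩
  · rw [mul_smul_comm, hr, ← coe_mul_eq_smul, ← coe_mul, inv_mul_cancel₀ h, coe_one]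
  · rw [smul_mul_assoc, hl, ← coe_mul_eq_smul, ← coe_mul, inv_mul_cancel₀ h, coe_one]

section Ordered

variable [LinearOrder K] [IsStrictOrderedRing K]

theorem re_star_mul_self_pos {a b : K} (ha : a < 0) (hb : b < 0) {x : ℍ[K,a,b]} (hx : x ≠ 0) :
    0 < (star x * x).re := by
  have hre : (star x * x).re =
      x.re ^ 2 + (-a) * x.imI ^ 2 + (-b) * x.imJ ^ 2 + (a * b) * x.imK ^ 2 := by
    simp only [re_mul, re_star, imI_star, imJ_star, imK_star]
    ring
  have hx' : x.re ≠ 0 ∨ x.imI ≠ 0 ∨ x.imJ ≠ 0 ∨ x.imK ≠ 0 := by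
    contrapose! hx
    ext <;> simp [hx]
  have hab : 0 < a * b := mul_pos_of_neg_of_neg ha hb
  rw [hre]
  rcases hx' with h | h | h | h <;>
    nlinarith [sq_pos_of_ne_zero h, sq_nonneg x.re,
      mul_nonneg (neg_nonneg.2 ha.le) (sq_nonneg x.imI),
      mul_nonneg (neg_nonneg.2 hb.le) (sq_nonneg x.imJ), mul_nonneg hab.le (sq_nonneg x.imK)]

end Ordered

def matrixBasis (s b : K) : Basis (Matrix (Fin 2) (Fin 2) K) (s ^ 2) 0 b where
  i := !![s, 0; 0, -s]
  j := !![0, 1; b, 0]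
  k := !![0, s; -(s * b), 0]
  i_mul_i := by ext i j; fin_cases i <;> fin_cases j <;> simp [sq]
  j_mul_j := by ext i j; fin_cases i <;> fin_cases j <;> simp
  i_mul_j := by ext i j; fin_cases i <;> fin_cases j <;> simp
  j_mul_i := by ext i j; fin_cases i <;> fin_cases j <;> simp [mul_comm]

theorem matrixBasis_liftHom_apply (s b : K) (x : ℍ[K, s ^ 2, b]) :
    (matrixBasis s b).liftHom x =
      !![x.re + x.imI * s, x.imJ + x.imK * s; x.imJ * b - x.imK * (s * b), x.re - x.imI * s] := by
  ext i j
  fin_cases i <;> fin_cases j <;>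
    simp [Basis.lift, matrixBasis, Matrix.algebraMap_eq_diagonal, sub_eq_add_neg]

variable [NeZero (2 : K)]

theorem injective_liftHom_matrixBasis {s b : K} (hs : s ≠ 0) (hb : b ≠ 0) :
    Function.Injective (matrixBasis s b).liftHom := by
  rw [injective_iff_map_eq_zero]
  intro x hx
  rw [matrixBasis_liftHom_apply] at hx
  have h00 : x.re + x.imI * s = 0 := by simpa using congr_fun₂ hx 0 0
  have h01 : x.imJ + x.imK * s = 0 := by simpa using congr_fun₂ hx 0 1
  have h10 : x.imJ * b - x.imK * (s * b) = 0 := by simpa using congr_fun₂ hx 1 0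
  have h11 : x.re - x.imI * s = 0 := by simpa using congr_fun₂ hx 1 1
  have hre : x.re = 0 := by
    have : (2 : K) * x.re = 0 := by linear_combination h00 + h11
    simpa [two_ne_zero] using this
  have hI : x.imI = 0 := by
    have : (2 * s) * x.imI = 0 := by linear_combination h00 - h11
    simpa [two_ne_zero, hs] using this
  have hK : x.imK = 0 := by
    have : (2 * s * b) * x.imK = 0 := by linear_combination b * h01 - h10
    simpa [two_ne_zero, hs, hb] using this
  have hJ : x.imJ = 0 := by linear_combination h01 - s * hK
  ext <;> simp [hre, hI, hJ, hK]

noncomputable def algEquivMatrixOfSq {s b : K} (hs : s ≠ 0) (hb : b ≠ 0) :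
    ℍ[K, s ^ 2, b] ≃ₐ[K] Matrix (Fin 2) (Fin 2) K :=
  have hinj := injective_liftHom_matrixBasis hs hb
  AlgEquiv.ofBijective (matrixBasis s b).liftHom
    ⟨hinj, (LinearMap.injective_iff_surjective_of_finrank_eq_finrank
      (f := (matrixBasis s b).liftHom.toLinearMap)
      (by simp [finrank_eq_four, Module.finrank_matrix])).1 hinj⟩

end QuaternionAlgebra

theorem real_quaternionAlgebra_matrix_or_divisionRing (a b : ℝ) (ha : a ≠ 0) (hb : b ≠ 0) :
    Nonempty (ℍ[ℝ, a, b] ≃ₐ[ℝ] Matrix (Fin 2) (Fin 2) ℝ) ∨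
      (∀ x : ℍ[ℝ, a, b], x ≠ 0 → IsUnit x) := by
  rcases ha.lt_or_gt with ha' | ha'
  · rcases hb.lt_or_gt with hb' | hb'
    · exact Or.inr fun x hx ↦
        isUnit_of_re_star_mul_self_ne_zero (re_star_mul_self_pos ha' hb' hx).ne'
    · rw [← Real.sq_sqrt hb'.le]
      exact Or.inl ⟨(swapEquiv a _).trans (algEquivMatrixOfSq (Real.sqrt_ne_zero'.2 hb') ha)⟩
  · rw [← Real.sq_sqrt ha'.le]
    exact Or.inl ⟨algEquivMatrixOfSq (Real.sqrt_ne_zero'.2 ha') hb⟩
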